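/- arXiv:2506.00346 — 2 statements merged into one kernel-verified Lean document; each statement's English description precedes it below -/
import Mathlib

section
/- For any matrix B ∈ ℂ^{m×m} and any Hermitian matrix σ ∈ ℂ^{m×m}, one has ‖B σ B†‖₁ ≤ ‖B |σ| B†‖₁, where |σ| := √(σ†σ). -/
open Matrix Set
open scoped ComplexOrder

attribute [local instance] Matrix.normedAddCommGroup Matrix.normedSpace

/-- The square root of a positive semidefinite matrix, as defined in the older Mathlib
(`Matrix.PosSemidef.sqrt`, since removed). -/
noncomputable def Matrix.PosSemidef.sqrt {n 𝕜 : Type*} [Fintype n] [DecidableEq n] [RCLike 𝕜]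
    {A : Matrix n n 𝕜} (hA : A.PosSemidef) : Matrix n n 𝕜 :=
  hA.1.eigenvectorUnitary.1 * diagonal ((↑) ∘ (√·) ∘ hA.1.eigenvalues) *
    (star hA.1.eigenvectorUnitary : Matrix n n 𝕜)

/-- Trace norm: `‖X‖₁ = Tr √(XᴴX)`. -/
noncomputable def traceNorm {m : ℕ} (X : Matrix (Fin m) (Fin m) ℂ) : ℝ :=
  ((Matrix.posSemidef_conjTranspose_mul_self X).sqrt.trace).re

/-- `A(t) = -i H(t) - (1/2) ∑ₖ γₖ(t) Lₖᴴ Lₖ`. -/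
noncomputable def Aop {m K : ℕ} (H : ℝ → Matrix (Fin m) (Fin m) ℂ)
    (L : Fin K → Matrix (Fin m) (Fin m) ℂ) (γ : Fin K → ℝ → ℝ) (t : ℝ) : Matrix (Fin m) (Fin m) ℂ :=
  (-Complex.I) • H t - (1 / 2 : ℂ) • ∑ k, (γ k t : ℂ) • ((L k)ᴴ * L k)

/-!
Since `σ` is Hermitian, `-|σ| ≤ σ ≤ |σ|` in the Loewner order, and congruence by `B` preserves
this: `-B|σ|Bᴴ ≤ BσBᴴ ≤ B|σ|Bᴴ`. If `-W ≤ Z ≤ W` with `Z` Hermitian, then in an eigenbasis of `Z`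
each eigenvalue `λᵢ` is a diagonal entry of `Z`, bounded in absolute value by the corresponding
diagonal entry of `W`; summing, `‖Z‖₁ = ∑ |λᵢ| ≤ Tr W`. Finally `W = B|σ|Bᴴ` is positive
semidefinite, so `Tr W = ‖W‖₁`.
-/

open scoped MatrixOrder

namespace Matrix

lemma abs_re_diag_le_of_neg_le_of_le {n 𝕜 : Type*} [RCLike 𝕜] {X Y : Matrix n n 𝕜}
    (h₁ : -Y ≤ X) (h₂ : X ≤ Y) (i : n) :
    |RCLike.re (X i i)| ≤ RCLike.re (Y i i) := by
  have hadd := (RCLike.nonneg_iff.mp ((le_iff.mp h₁).diag_nonneg (i := i))).1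
  have hsub := (RCLike.nonneg_iff.mp ((le_iff.mp h₂).diag_nonneg (i := i))).1
  simp only [sub_apply, neg_apply, sub_neg_eq_add, map_add, map_sub] at hadd hsub
  exact abs_le.mpr ⟨by linarith, by linarith⟩

variable {n 𝕜 : Type*} [Fintype n] [DecidableEq n] [RCLike 𝕜]

lemma PosSemidef.sqrt_eq_cfcSqrt {A : Matrix n n 𝕜} (hA : A.PosSemidef) :
    hA.sqrt = CFC.sqrt A := by
  rw [CFC.sqrt_eq_real_sqrt A hA.nonneg, cfcₙ_eq_cfc, hA.1.cfc_eq]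
  rfl

lemma sqrt_conjTranspose_mul_self_eq_cfcAbs (X : Matrix n n 𝕜) :
    (posSemidef_conjTranspose_mul_self X).sqrt = CFC.abs X :=
  PosSemidef.sqrt_eq_cfcSqrt _

lemma IsHermitian.le_cfcAbs {A : Matrix n n 𝕜} (hA : A.IsHermitian) : A ≤ CFC.abs A := by
  rw [← sub_nonneg, CFC.abs_sub_self A hA.isSelfAdjoint]
  exact nsmul_nonneg (CFC.negPart_nonneg A) 2

lemma IsHermitian.neg_cfcAbs_le {A : Matrix n n 𝕜} (hA : A.IsHermitian) : -CFC.abs A ≤ A := by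
  rw [neg_le_iff_add_nonneg', CFC.abs_add_self A hA.isSelfAdjoint]
  exact nsmul_nonneg (CFC.posPart_nonneg A) 2

lemma IsHermitian.re_trace_cfcAbs {A : Matrix n n 𝕜} (hA : A.IsHermitian) :
    RCLike.re (CFC.abs A).trace = ∑ i, |hA.eigenvalues i| := by
  rw [CFC.abs_eq_cfc_norm A hA.isSelfAdjoint, hA.cfc_eq, IsHermitian.cfc,
    Unitary.conjStarAlgAut_apply, trace_mul_cycle, Unitary.coe_star_mul_self, one_mul,
    trace_diagonal, map_sum]
  simp

lemma IsHermitian.re_trace_cfcAbs_le {Z W : Matrix n n 𝕜} (hZ : Z.IsHermitian)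
    (h₁ : -W ≤ Z) (h₂ : Z ≤ W) : RCLike.re (CFC.abs Z).trace ≤ RCLike.re W.trace := by
  set U : Matrix n n 𝕜 := (hZ.eigenvectorUnitary : Matrix n n 𝕜)
  have hU : U * star U = 1 := Unitary.mul_star_self_of_mem hZ.eigenvectorUnitary.2
  have hdiag : star U * Z * U = diagonal (RCLike.ofReal ∘ hZ.eigenvalues) := by
    simpa [Unitary.conjStarAlgAut_apply] using hZ.conjStarAlgAut_star_eigenvectorUnitary
  have htrace : W.trace = (star U * W * U).trace := by
    rw [trace_mul_cycle, hU, one_mul]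
  rw [hZ.re_trace_cfcAbs, htrace, trace, map_sum]
  gcongr with i
  have h₁' : -(star U * W * U) ≤ star U * Z * U := by
    simpa using star_left_conjugate_le_conjugate h₁ U
  simpa [hdiag] using
    abs_re_diag_le_of_neg_le_of_le h₁' (star_left_conjugate_le_conjugate h₂ U) i

end Matrix

lemma traceNorm_eq_re_trace_cfcAbs {m : ℕ} (X : Matrix (Fin m) (Fin m) ℂ) :
    traceNorm X = (CFC.abs X).trace.re := by
  rw [traceNorm, sqrt_conjTranspose_mul_self_eq_cfcAbs]

theorem stmt_3_general {m : ℕ}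
    (B σ : Matrix (Fin m) (Fin m) ℂ) (hσ : σ.IsHermitian) :
    traceNorm (B * σ * Bᴴ) ≤
      traceNorm (B * (Matrix.posSemidef_conjTranspose_mul_self σ).sqrt * Bᴴ) := by
  have hconj {X Y : Matrix (Fin m) (Fin m) ℂ} (h : X ≤ Y) : B * X * Bᴴ ≤ B * Y * Bᴴ := by
    simpa [star_eq_conjTranspose] using star_left_conjugate_le_conjugate h Bᴴ
  have habs_nonneg : 0 ≤ B * CFC.abs σ * Bᴴ := by simpa using hconj (CFC.abs_nonneg σ)
  rw [traceNorm_eq_re_trace_cfcAbs, traceNorm_eq_re_trace_cfcAbs,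
    sqrt_conjTranspose_mul_self_eq_cfcAbs, CFC.abs_of_nonneg _ habs_nonneg]
  refine (isHermitian_mul_mul_conjTranspose B hσ).re_trace_cfcAbs_le ?_ (hconj hσ.le_cfcAbs)
  simpa using hconj hσ.neg_cfcAbs_le

theorem stmt_3 {m : ℕ} (hm : 1 ≤ m)
    (B σ : Matrix (Fin m) (Fin m) ℂ) (hσ : σ.IsHermitian) :
    traceNorm (B * σ * Bᴴ) ≤
      traceNorm (B * (Matrix.posSemidef_conjTranspose_mul_self σ).sqrt * Bᴴ) :=
  stmt_3_general B σ hσ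
end

section
/- For every τ > 0, every n, and every Hermitian positive semidefinite matrix ρ ∈ ℂ^{m×m}, the one-step FREM output Φ(t_n, ρ) is Hermitian and positive semidefinite. -/
open Matrix Set
open scoped ComplexOrder

attribute [local instance] Matrix.normedAddCommGroup Matrix.normedSpace

/-- Forward full-rank exponential midpoint one-step map `Φ(tₙ, ρ)`. -/
noncomputable def Phi {m K : ℕ} (H : ℝ → Matrix (Fin m) (Fin m) ℂ)
    (L : Fin K → Matrix (Fin m) (Fin m) ℂ) (γ : Fin K → ℝ → ℝ) (τ tn : ℝ) (ρ : Matrix (Fin m) (Fin m) ℂ) : Matrix (Fin m) (Fin m) ℂ :=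
  NormedSpace.exp (τ • Aop H L γ (tn + τ / 2)) * ρ *
      NormedSpace.exp (τ • (Aop H L γ (tn + τ / 2))ᴴ) +
    (τ : ℂ) • ∑ k, (γ k (tn + τ / 2) : ℂ) •
      (NormedSpace.exp ((τ / 2) • Aop H L γ (tn + τ / 2)) * L k *
        (NormedSpace.exp ((τ / 2) • Aop H L γ tn) *
          (ρ + (τ / 2 : ℂ) • ∑ j, (γ j tn : ℂ) • (L j * ρ * (L j)ᴴ)) *
          NormedSpace.exp ((τ / 2) • (Aop H L γ tn)ᴴ)) * (L k)ᴴ *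
        NormedSpace.exp ((τ / 2) • (Aop H L γ (tn + τ / 2))ᴴ))


/-! Since `exp (c • Aᴴ) = (exp (c • A))ᴴ`, the intermediate state `ρ_{1/2}` and both terms
of `Φ` are nonnegative combinations of congruences `X σ Xᴴ` of positive semidefinite matrices,
and congruence preserves positive semidefiniteness. -/

theorem Matrix.exp_smul_conjTranspose {n 𝕜 : Type*} [Fintype n] [DecidableEq n] [RCLike 𝕜]
    (c : ℝ) (A : Matrix n n 𝕜) :
    NormedSpace.exp (c • Aᴴ) = (NormedSpace.exp (c • A))ᴴ := by
  rw [← Matrix.exp_conjTranspose, conjTranspose_smul, star_trivial]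

theorem Matrix.PosSemidef.smul_sum_smul_mul_mul_conjTranspose_same {ι n m R : Type*}
    [Fintype ι] [Fintype m] [Fintype n] [CommRing R] [PartialOrder R] [StarRing R]
    [StarOrderedRing R] [IsOrderedRing R] {ρ : Matrix n n R} (hρ : ρ.PosSemidef) {c : R} (hc : 0 ≤ c)
    {w : ι → R} (hw : ∀ k, 0 ≤ w k) (B : ι → Matrix m n R) :
    (c • ∑ k, w k • (B k * ρ * (B k)ᴴ)).PosSemidef :=
  (posSemidef_sum _ fun k _ => (hρ.mul_mul_conjTranspose_same (B k)).smul (hw k)).smul hc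

theorem stmt_7_general {m K : ℕ}
    (H : ℝ → Matrix (Fin m) (Fin m) ℂ)
    (L : Fin K → Matrix (Fin m) (Fin m) ℂ)
    (γ : Fin K → ℝ → ℝ) (hγ : ∀ k t, 0 ≤ γ k t)
    (τ : ℝ) (hτ : 0 < τ) (n : ℕ)
    (ρ : Matrix (Fin m) (Fin m) ℂ) (hρ : ρ.PosSemidef) :
    (Phi H L γ τ ((n : ℝ) * τ) ρ).PosSemidef := by
  set tₙ : ℝ := n * τ
  have hτ' : (0 : ℂ) ≤ τ := Complex.zero_le_real.mpr hτ.le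
  have hγ' (t : ℝ) (k : Fin K) : (0 : ℂ) ≤ γ k t := Complex.zero_le_real.mpr (hγ k t)
  have hρ_half : (ρ + (τ / 2 : ℂ) • ∑ j, (γ j tₙ : ℂ) • (L j * ρ * (L j)ᴴ)).PosSemidef :=
    hρ.add (hρ.smul_sum_smul_mul_mul_conjTranspose_same (by positivity) (hγ' tₙ) L)
  unfold Phi
  simp only [exp_smul_conjTranspose]
  set E := NormedSpace.exp ((τ / 2) • Aop H L γ (tₙ + τ / 2))
  have hjump (k : Fin K) (σ : Matrix (Fin m) (Fin m) ℂ) :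
      E * L k * σ * (L k)ᴴ * Eᴴ = E * L k * σ * (E * L k)ᴴ := by
    rw [conjTranspose_mul, ← mul_assoc]
  simp only [hjump]
  exact (hρ.mul_mul_conjTranspose_same _).add <|
    (hρ_half.mul_mul_conjTranspose_same _).smul_sum_smul_mul_mul_conjTranspose_same hτ'
      (hγ' (tₙ + τ / 2)) (fun k => E * L k)

theorem stmt_7 {m K : ℕ} (hm : 1 ≤ m) (hK : 1 ≤ K)
    (H : ℝ → Matrix (Fin m) (Fin m) ℂ) (hH : ∀ t, (H t).IsHermitian)
    (L : Fin K → Matrix (Fin m) (Fin m) ℂ)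
    (γ : Fin K → ℝ → ℝ) (hγc : ∀ k, Continuous (γ k)) (hγ : ∀ k t, 0 ≤ γ k t)
    (T : ℝ) (hT : 0 < T)
    (τ : ℝ) (hτ : 0 < τ) (n : ℕ)
    (ρ : Matrix (Fin m) (Fin m) ℂ) (hρ : ρ.PosSemidef) :
    (Phi H L γ τ ((n : ℝ) * τ) ρ).PosSemidef :=
  stmt_7_general H L γ hγ τ hτ n ρ hρ
end
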